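/- A third-order quaternion tensor A ∈ ℍ^{n×n×n₃} is unitary if and only if the quaternion matrix bcirc_z(A) ∈ ℍ^{nn₃×nn₃} is unitary (i.e., bcirc_z(A)·bcirc_z(A)* = bcirc_z(A)*·bcirc_z(A) = I_{nn₃}). -/

import Mathlib

open Matrix Kronecker

noncomputable section

/-- The real quaternions. -/
abbrev Quat := Quaternion ℝ

/-- The embedding of `ℂ` into the quaternions (via `1` and `i`). -/
def c2q (z : ℂ) : Quat := ⟨z.re, z.im, 0, 0⟩

/-- The quaternion imaginary unit `j`. -/
def jH : Quat := ⟨0, 0, 1, 0⟩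

/-- The first complex component of a quaternion: `q = c2q (qd q) + jH * c2q (qc q)`. -/
def qd (q : Quat) : ℂ := ⟨q.re, q.imI⟩

/-- The second complex component of a quaternion. -/
def qc (q : Quat) : ℂ := ⟨q.imJ, -q.imK⟩

/-- A third-order tensor, given by its family of frontal slices. -/
abbrev Tensor (α : Type*) (n₁ n₂ n₃ : ℕ) := Fin n₃ → Matrix (Fin n₁) (Fin n₂) α

/-- The complex tensor `A_d` in the decomposition `A = A_d + j·A_c`. -/
def Td {n₁ n₂ n₃ : ℕ} (A : Tensor Quat n₁ n₂ n₃) : Tensor ℂ n₁ n₂ n₃ :=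
  fun k i j => qd (A k i j)

/-- The complex tensor `A_c` in the decomposition `A = A_d + j·A_c`. -/
def Tc {n₁ n₂ n₃ : ℕ} (A : Tensor Quat n₁ n₂ n₃) : Tensor ℂ n₁ n₂ n₃ :=
  fun k i j => qc (A k i j)

/-- The normalized `n × n` DFT matrix (0-indexed). -/
def Fmat (n : ℕ) : Matrix (Fin n) (Fin n) ℂ :=
  fun s t => (((Real.sqrt (n : ℝ)) : ℂ))⁻¹ *
    Complex.exp ((-2 * (Real.pi : ℂ) * Complex.I * ((s : ℕ) : ℂ) * ((t : ℕ) : ℂ)) / (n : ℂ))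

/-- The flip permutation matrix `P_n` (0-indexed: `P_{s,t} = 1` iff `s + t ≡ 0 (mod n)`). -/
def Pmat (n : ℕ) : Matrix (Fin n) (Fin n) ℂ :=
  fun s t => if ((s : ℕ) + (t : ℕ)) % n = 0 then 1 else 0

/-- Left scalar multiplication of a quaternion matrix by a quaternion. -/
def lsmul {m n : Type*} (q : Quat) (M : Matrix m n Quat) : Matrix m n Quat :=
  fun i j => q * M i j

/-- Right scalar multiplication of a quaternion matrix by a quaternion. -/
def rsmul {m n : Type*} (q : Quat) (M : Matrix m n Quat) : Matrix m n Quat :=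
  fun i j => M i j * q

/-- The block circulant matrix of a third-order tensor. -/
def bcirc {α : Type*} {n₁ n₂ n₃ : ℕ} (T : Tensor α n₁ n₂ n₃) :
    Matrix (Fin n₃ × Fin n₁) (Fin n₃ × Fin n₂) α :=
  fun p q => T (p.1 - q.1) p.2 q.2

/-- The z-block circulant matrix `bcirc_z(A) = bcirc(A_d) + j·bcirc(A_c)·(P_{n₃} ⊗ I_{n₂})`. -/
def bcircz {n₁ n₂ n₃ : ℕ} (A : Tensor Quat n₁ n₂ n₃) :
    Matrix (Fin n₃ × Fin n₁) (Fin n₃ × Fin n₂) Quat :=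
  (bcirc (Td A)).map c2q +
    lsmul jH ((bcirc (Tc A) * (Pmat n₃ ⊗ₖ (1 : Matrix (Fin n₂) (Fin n₂) ℂ))).map c2q)

/-- `unfold`: stack the frontal slices vertically. -/
def unfoldT {α : Type*} {n₁ n₂ n₃ : ℕ} (T : Tensor α n₁ n₂ n₃) :
    Matrix (Fin n₃ × Fin n₁) (Fin n₂) α :=
  fun p j => T p.1 p.2 j

/-- `fold`: the inverse of `unfold`. -/
def foldT {α : Type*} {n₁ n₂ n₃ : ℕ} (M : Matrix (Fin n₃ × Fin n₁) (Fin n₂) α) :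
    Tensor α n₁ n₂ n₃ :=
  fun k i j => M (k, i) j

/-- The QT-product `A *_Q B = fold(bcirc_z(A)·unfold(B))`. -/
def qtmul {n₁ r n₂ n₃ : ℕ} (A : Tensor Quat n₁ r n₃) (B : Tensor Quat r n₂ n₃) :
    Tensor Quat n₁ n₂ n₃ :=
  foldT (bcircz A * unfoldT B)

/-- The mode-3 quaternion DFT
`Â(i,j,:) = √n₃·F_{n₃}·A_d(i,j,:) + j·√n₃·P_{n₃}·F_{n₃}·A_c(i,j,:)`, tube-wise. -/
def hatT {n₁ n₂ n₃ : ℕ} (A : Tensor Quat n₁ n₂ n₃) : Tensor Quat n₁ n₂ n₃ :=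
  fun k i j =>
    c2q (((Real.sqrt (n₃ : ℝ)) : ℂ) * ∑ t, Fmat n₃ k t * Td A t i j) +
    jH * c2q (((Real.sqrt (n₃ : ℝ)) : ℂ) * ∑ t, (Pmat n₃ * Fmat n₃) k t * Tc A t i j)

/-- `diag(Â)`: the block diagonal matrix with the frontal slices as diagonal blocks. -/
def blkDiag {α : Type*} [Zero α] {n₁ n₂ n₃ : ℕ} (T : Tensor α n₁ n₂ n₃) :
    Matrix (Fin n₃ × Fin n₁) (Fin n₃ × Fin n₂) α :=
  fun p q => if p.1 = q.1 then T p.1 p.2 q.2 else 0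

/-- Conjugate transpose of a complex tensor: conjugate-transpose each slice and
reverse the order of slices `2,…,n₃` (i.e. slice `k ↦ -k` in 0-indexing). -/
def cConjT {n₁ n₂ n₃ : ℕ} (T : Tensor ℂ n₁ n₂ n₃) : Tensor ℂ n₂ n₁ n₃ :=
  fun k => (T (-k))ᴴ

/-- Conjugate transpose of a quaternion tensor, defined by
`unfold(A*) = unfold(A_d*) − (P_{n₃} ⊗ I_{n₂})·unfold(A_c*)·j`. -/
def tConjT {n₁ n₂ n₃ : ℕ} (A : Tensor Quat n₁ n₂ n₃) : Tensor Quat n₂ n₁ n₃ :=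
  foldT ((unfoldT (cConjT (Td A))).map c2q -
    rsmul jH (((Pmat n₃ ⊗ₖ (1 : Matrix (Fin n₂) (Fin n₂) ℂ)) *
      unfoldT (cConjT (Tc A))).map c2q))

/-- The identity tensor: identity matrix as first frontal slice, zero elsewhere. -/
def idT (n n₃ : ℕ) : Tensor Quat n n n₃ :=
  fun k => if (k : ℕ) = 0 then (1 : Matrix (Fin n) (Fin n) Quat) else 0

/-- A quaternion tensor is unitary if `U* *_Q U = U *_Q U* = I`. -/
def IsUnitaryT {n n₃ : ℕ} (U : Tensor Quat n n n₃) : Prop :=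
  qtmul (tConjT U) U = idT n n₃ ∧ qtmul U (tConjT U) = idT n n₃

/-- A quaternion tensor is Hermitian if `H* = H`. -/
def IsHermitianT {n n₃ : ℕ} (H : Tensor Quat n n n₃) : Prop := tConjT H = H

/-- A quaternion matrix `M` is positive semidefinite if `x*·M·x` is a nonnegative
real number for every quaternion vector `x`. -/
def IsPSDMat {m : Type*} [Fintype m] (M : Matrix m m Quat) : Prop :=
  ∀ x : m → Quat, ∃ r : ℝ, 0 ≤ r ∧ (star x) ⬝ᵥ M.mulVec x = (r : Quat)


-- ===== auxiliary lemmas =====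

lemma c2q_re (z : ℂ) : (c2q z).re = z.re := rfl
lemma c2q_imI (z : ℂ) : (c2q z).imI = z.im := rfl
lemma c2q_imJ (z : ℂ) : (c2q z).imJ = 0 := rfl
lemma c2q_imK (z : ℂ) : (c2q z).imK = 0 := rfl
lemma jH_re : jH.re = 0 := rfl
lemma jH_imI : jH.imI = 0 := rfl
lemma jH_imJ : jH.imJ = 1 := rfl
lemma jH_imK : jH.imK = 0 := rfl

lemma c2q_add (a b : ℂ) : c2q (a + b) = c2q a + c2q b := by
  ext <;> simp [c2q_re, c2q_imI, c2q_imJ, c2q_imK]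

lemma c2q_zero : c2q 0 = 0 := by ext <;> simp [c2q_re, c2q_imI, c2q_imJ, c2q_imK, Quaternion.re_zero, Quaternion.imI_zero, Quaternion.imJ_zero, Quaternion.imK_zero]

lemma c2q_one : c2q 1 = 1 := by ext <;> simp [c2q_re, c2q_imI, c2q_imJ, c2q_imK, Quaternion.re_one, Quaternion.imI_one, Quaternion.imJ_one, Quaternion.imK_one]

/-- `c2q` as an additive monoid hom. -/
def c2qA : ℂ →+ Quat where
  toFun := c2q
  map_zero' := c2q_zero
  map_add' := c2q_add

lemma c2q_sum {α : Type*} (s : Finset α) (f : α → ℂ) :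
    c2q (∑ x ∈ s, f x) = ∑ x ∈ s, c2q (f x) := map_sum c2qA f s

lemma qd_add (a b : Quat) : qd (a + b) = qd a + qd b := by
  simp [qd, Complex.ext_iff]

lemma qc_add (a b : Quat) : qc (a + b) = qc a + qc b := by
  simp [qc, Complex.ext_iff]; ring

def qdA : Quat →+ ℂ where
  toFun := qd
  map_zero' := by simp [qd, Complex.ext_iff, Quaternion.re_zero, Quaternion.imI_zero, Quaternion.imJ_zero, Quaternion.imK_zero]
  map_add' := qd_add

def qcA : Quat →+ ℂ where
  toFun := qc
  map_zero' := by simp [qc, Complex.ext_iff, Quaternion.re_zero, Quaternion.imI_zero, Quaternion.imJ_zero, Quaternion.imK_zero]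
  map_add' := qc_add

lemma qmul_split (a c a' c' : ℂ) :
    (c2q a + jH * c2q c) * (c2q a' + jH * c2q c') =
      c2q (a * a' - (starRingEnd ℂ) c * c') + jH * c2q (c * a' + (starRingEnd ℂ) a * c') := by
  ext <;> simp [c2q_re, c2q_imI, c2q_imJ, c2q_imK, jH_re, jH_imI, jH_imJ, jH_imK, Quaternion.re_mul, Quaternion.imI_mul, Quaternion.imJ_mul,
    Quaternion.imK_mul, Complex.ext_iff] <;> ring

lemma qd_split (a c : ℂ) : qd (c2q a + jH * c2q c) = a := by
  simp [qd, c2q_re, c2q_imI, c2q_imJ, c2q_imK, jH_re, jH_imI, jH_imJ, jH_imK, Complex.ext_iff, Quaternion.re_mul, Quaternion.imI_mul]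

lemma qc_split (a c : ℂ) : qc (c2q a + jH * c2q c) = c := by
  simp [qc, c2q_re, c2q_imI, c2q_imJ, c2q_imK, jH_re, jH_imI, jH_imJ, jH_imK, Complex.ext_iff, Quaternion.imJ_mul, Quaternion.imK_mul]

lemma qsplit (q : Quat) : c2q (qd q) + jH * c2q (qc q) = q := by
  ext <;> simp [qd, qc, c2q_re, c2q_imI, c2q_imJ, c2q_imK, jH_re, jH_imI, jH_imJ, jH_imK, Quaternion.re_mul, Quaternion.imI_mul,
    Quaternion.imJ_mul, Quaternion.imK_mul]

lemma star_split (a c : ℂ) :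
    star (c2q a + jH * c2q c) = c2q ((starRingEnd ℂ) a) + jH * c2q (-c) := by
  ext <;> simp [c2q_re, c2q_imI, c2q_imJ, c2q_imK, jH_re, jH_imI, jH_imJ, jH_imK, Quaternion.re_mul, Quaternion.imI_mul, Quaternion.imJ_mul,
    Quaternion.imK_mul, Complex.ext_iff]

lemma c2q_mul_jH (z : ℂ) : c2q z * jH = jH * c2q ((starRingEnd ℂ) z) := by
  ext <;> simp [c2q_re, c2q_imI, c2q_imJ, c2q_imK, jH_re, jH_imI, jH_imJ, jH_imK, Quaternion.re_mul, Quaternion.imI_mul, Quaternion.imJ_mul,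
    Quaternion.imK_mul]

lemma jH_mul_c2q_neg (z : ℂ) : -(jH * c2q z) = jH * c2q (-z) := by
  ext <;> simp [c2q_re, c2q_imI, c2q_imJ, c2q_imK, jH_re, jH_imI, jH_imJ, jH_imK, Quaternion.re_mul, Quaternion.imI_mul, Quaternion.imJ_mul,
    Quaternion.imK_mul]

lemma qd_mix (a c : ℂ) (q : Quat) :
    qd ((c2q a + jH * c2q c) * q) = a * qd q - (starRingEnd ℂ) c * qc q := by
  conv_lhs => rw [← qsplit q]
  rw [qmul_split, qd_split]

lemma qc_mix (a c : ℂ) (q : Quat) :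
    qc ((c2q a + jH * c2q c) * q) = c * qd q + (starRingEnd ℂ) a * qc q := by
  conv_lhs => rw [← qsplit q]
  rw [qmul_split, qc_split]

lemma fin_val_eq_zero {m : ℕ} [NeZero m] (a : Fin m) : (a : ℕ) = 0 ↔ a = 0 := by
  constructor
  · intro h
    exact Fin.val_injective (by simp [h])
  · rintro rfl; simp

section NZ

variable {n₃ : ℕ} [NeZero n₃]

lemma Pmat_apply (u t : Fin n₃) : Pmat n₃ u t = if u = -t then 1 else 0 := by
  unfold Pmat
  congr 1
  rw [eq_iff_iff, ← Fin.val_add u t, fin_val_eq_zero]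
  exact add_eq_zero_iff_eq_neg

lemma bcircP_apply {n₁ n₂ : ℕ} (T : Tensor ℂ n₁ n₂ n₃) (s : Fin n₃) (i : Fin n₁)
    (t : Fin n₃) (j : Fin n₂) :
    (bcirc T * (Pmat n₃ ⊗ₖ (1 : Matrix (Fin n₂) (Fin n₂) ℂ))) (s, i) (t, j)
      = T (s + t) i j := by
  rw [Matrix.mul_apply, Fintype.sum_prod_type]
  simp only [kroneckerMap_apply, bcirc, Pmat_apply, Matrix.one_apply, mul_ite, mul_one,
    mul_zero, ite_mul, zero_mul]
  simp [Finset.sum_ite_eq, Finset.sum_ite_eq', sub_neg_eq_add]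

lemma Pbcol_apply {n₁ n₂ : ℕ} (M : Matrix (Fin n₃ × Fin n₂) (Fin n₁) ℂ)
    (k : Fin n₃) (i : Fin n₂) (j : Fin n₁) :
    ((Pmat n₃ ⊗ₖ (1 : Matrix (Fin n₂) (Fin n₂) ℂ)) * M) (k, i) j = M (-k, i) j := by
  rw [Matrix.mul_apply, Fintype.sum_prod_type]
  have hcond : ∀ x : Fin n₃, (k = -x) = (x = -k) := fun x => by
    rw [eq_iff_iff, eq_comm, neg_eq_iff_eq_neg, eq_comm]
  simp only [kroneckerMap_apply, Pmat_apply, Matrix.one_apply, mul_ite, mul_one,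
    mul_zero, ite_mul, zero_mul, one_mul, hcond]
  simp [Finset.sum_ite_eq, Finset.sum_ite_eq']

lemma bcircz_apply {n₁ n₂ : ℕ} (A : Tensor Quat n₁ n₂ n₃) (s : Fin n₃) (i : Fin n₁)
    (t : Fin n₃) (j : Fin n₂) :
    bcircz A (s, i) (t, j) = c2q (Td A (s - t) i j) + jH * c2q (Tc A (s + t) i j) := by
  simp only [bcircz, Matrix.add_apply, Matrix.map_apply, lsmul, bcircP_apply]
  rfl

lemma qtmul_apply {n₁ r n₂ : ℕ} (A : Tensor Quat n₁ r n₃) (B : Tensor Quat r n₂ n₃)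
    (k : Fin n₃) (i : Fin n₁) (j : Fin n₂) :
    qtmul A B k i j =
      ∑ u : Fin n₃, ∑ v : Fin r,
        (c2q (Td A (k - u) i v) + jH * c2q (Tc A (k + u) i v)) * B u v j := by
  simp only [qtmul, foldT, Matrix.mul_apply, Fintype.sum_prod_type, unfoldT]
  refine Finset.sum_congr rfl fun u _ => Finset.sum_congr rfl fun v _ => ?_
  rw [bcircz_apply]

lemma Td_qtmul {n₁ r n₂ : ℕ} (A : Tensor Quat n₁ r n₃) (B : Tensor Quat r n₂ n₃)
    (k : Fin n₃) (i : Fin n₁) (j : Fin n₂) :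
    Td (qtmul A B) k i j =
      ∑ u : Fin n₃, ∑ v : Fin r,
        (Td A (k - u) i v * Td B u v j
          - (starRingEnd ℂ) (Tc A (k + u) i v) * Tc B u v j) := by
  show qdA (qtmul A B k i j) = _
  rw [qtmul_apply, map_sum]
  refine Finset.sum_congr rfl fun u _ => ?_
  rw [map_sum]
  refine Finset.sum_congr rfl fun v _ => ?_
  show qd _ = _
  rw [qd_mix]
  rfl

lemma Tc_qtmul {n₁ r n₂ : ℕ} (A : Tensor Quat n₁ r n₃) (B : Tensor Quat r n₂ n₃)
    (k : Fin n₃) (i : Fin n₁) (j : Fin n₂) :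
    Tc (qtmul A B) k i j =
      ∑ u : Fin n₃, ∑ v : Fin r,
        (Tc A (k + u) i v * Td B u v j
          + (starRingEnd ℂ) (Td A (k - u) i v) * Tc B u v j) := by
  show qcA (qtmul A B k i j) = _
  rw [qtmul_apply, map_sum]
  refine Finset.sum_congr rfl fun u _ => ?_
  rw [map_sum]
  refine Finset.sum_congr rfl fun v _ => ?_
  show qc _ = _
  rw [qc_mix]
  rfl

lemma bcircz_mul {n₁ r n₂ : ℕ} (A : Tensor Quat n₁ r n₃) (B : Tensor Quat r n₂ n₃) :
    bcircz A * bcircz B = bcircz (qtmul A B) := by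
  refine Matrix.ext fun p q => ?_
  obtain ⟨s, i⟩ := p; obtain ⟨t, j⟩ := q
  have hd : (∑ u : Fin n₃, ∑ v : Fin r,
      (Td A (s - t - u) i v * Td B u v j
        - (starRingEnd ℂ) (Tc A (s - t + u) i v) * Tc B u v j)) =
      ∑ u : Fin n₃, ∑ v : Fin r,
      (Td A (s - u) i v * Td B (u - t) v j
        - (starRingEnd ℂ) (Tc A (s + u) i v) * Tc B (u + t) v j) := by
    rw [Finset.sum_comm]
    conv_rhs => rw [Finset.sum_comm]
    refine Finset.sum_congr rfl fun v _ => ?_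
    rw [Finset.sum_sub_distrib, Finset.sum_sub_distrib]
    congr 1
    · conv_rhs => rw [← Equiv.sum_comp (Equiv.addRight t)
        (fun u => Td A (s - u) i v * Td B (u - t) v j)]
      refine Finset.sum_congr rfl fun u _ => ?_
      simp only [Equiv.coe_addRight]
      rw [add_sub_cancel_right, sub_add_eq_sub_sub, sub_right_comm]
    · conv_rhs => rw [← Equiv.sum_comp (Equiv.subRight t)
        (fun u => (starRingEnd ℂ) (Tc A (s + u) i v) * Tc B (u + t) v j)]
      refine Finset.sum_congr rfl fun u _ => ?_
      simp only [Equiv.subRight_apply]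
      rw [sub_add_cancel]
      congr 2
      abel_nf
  have hc : (∑ u : Fin n₃, ∑ v : Fin r,
      (Tc A (s + t + u) i v * Td B u v j
        + (starRingEnd ℂ) (Td A (s + t - u) i v) * Tc B u v j)) =
      ∑ u : Fin n₃, ∑ v : Fin r,
      (Tc A (s + u) i v * Td B (u - t) v j
        + (starRingEnd ℂ) (Td A (s - u) i v) * Tc B (u + t) v j) := by
    rw [Finset.sum_comm]
    conv_rhs => rw [Finset.sum_comm]
    refine Finset.sum_congr rfl fun v _ => ?_
    rw [Finset.sum_add_distrib, Finset.sum_add_distrib]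
    congr 1
    · conv_rhs => rw [← Equiv.sum_comp (Equiv.addRight t)
        (fun u => Tc A (s + u) i v * Td B (u - t) v j)]
      refine Finset.sum_congr rfl fun u _ => ?_
      simp only [Equiv.coe_addRight]
      rw [add_sub_cancel_right]
      congr 2
      abel_nf
    · conv_rhs => rw [← Equiv.sum_comp (Equiv.subRight t)
        (fun u => (starRingEnd ℂ) (Td A (s - u) i v) * Tc B (u + t) v j)]
      refine Finset.sum_congr rfl fun u _ => ?_
      simp only [Equiv.subRight_apply]
      rw [sub_add_cancel]
      congr 3
      abel_nf
  have hterm : ∀ u : Fin n₃, ∀ v : Fin r,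
      bcircz A (s, i) (u, v) * bcircz B (u, v) (t, j) =
        c2q (Td A (s - u) i v * Td B (u - t) v j
            - (starRingEnd ℂ) (Tc A (s + u) i v) * Tc B (u + t) v j)
        + jH * c2q (Tc A (s + u) i v * Td B (u - t) v j
            + (starRingEnd ℂ) (Td A (s - u) i v) * Tc B (u + t) v j) := by
    intro u v
    rw [bcircz_apply, bcircz_apply, qmul_split]
  rw [Matrix.mul_apply, Fintype.sum_prod_type, bcircz_apply, Td_qtmul, Tc_qtmul,
    hd, hc]
  simp only [hterm, Finset.sum_add_distrib, c2q_sum, c2q_add, Finset.mul_sum, mul_add]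

lemma helper_conj (d c : ℂ) :
    c2q (star d) - c2q (star c) * jH = c2q ((starRingEnd ℂ) d) + jH * c2q (-c) := by
  have h1 : ∀ z : ℂ, (star z).re = z.re := fun z => rfl
  have h2 : ∀ z : ℂ, (star z).im = -z.im := fun z => rfl
  have h3 : ∀ z : ℂ, ((starRingEnd ℂ) z) = star z := fun z => rfl
  rw [sub_eq_add_neg]
  ext <;>
    simp only [c2q_re, c2q_imI, c2q_imJ, c2q_imK, jH_re, jH_imI, jH_imJ, jH_imK, Quaternion.re_add, Quaternion.imI_add, Quaternion.imJ_add,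
      Quaternion.imK_add, Quaternion.re_neg, Quaternion.imI_neg, Quaternion.imJ_neg,
      Quaternion.imK_neg, Quaternion.re_mul, Quaternion.imI_mul, Quaternion.imJ_mul,
      Quaternion.imK_mul, h1, h2, h3, Complex.neg_re, Complex.neg_im] <;> ring

lemma tConjT_apply {n₁ n₂ : ℕ} (A : Tensor Quat n₁ n₂ n₃) (k : Fin n₃) (i : Fin n₂)
    (j : Fin n₁) :
    tConjT A k i j = c2q ((starRingEnd ℂ) (Td A (-k) j i))
      + jH * c2q (-(Tc A k j i)) := by
  simp only [tConjT, foldT, Matrix.sub_apply, Matrix.map_apply, rsmul, unfoldT, cConjT,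
    Matrix.conjTranspose_apply, Pbcol_apply, neg_neg]
  exact helper_conj _ _

lemma Td_tConjT {n₁ n₂ : ℕ} (A : Tensor Quat n₁ n₂ n₃) (k : Fin n₃) (i : Fin n₂)
    (j : Fin n₁) : Td (tConjT A) k i j = (starRingEnd ℂ) (Td A (-k) j i) := by
  show qd _ = _
  rw [tConjT_apply, qd_split]

lemma Tc_tConjT {n₁ n₂ : ℕ} (A : Tensor Quat n₁ n₂ n₃) (k : Fin n₃) (i : Fin n₂)
    (j : Fin n₁) : Tc (tConjT A) k i j = -(Tc A k j i) := by
  show qc _ = _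
  rw [tConjT_apply, qc_split]

lemma bcircz_conjT {n₁ n₂ : ℕ} (A : Tensor Quat n₁ n₂ n₃) :
    bcircz (tConjT A) = (bcircz A)ᴴ := by
  refine Matrix.ext fun p q => ?_
  obtain ⟨s, i⟩ := p; obtain ⟨t, j⟩ := q
  rw [Matrix.conjTranspose_apply, bcircz_apply, bcircz_apply, Td_tConjT, Tc_tConjT,
    star_split, neg_sub s t, add_comm t s]

lemma bcircz_idT {n : ℕ} : bcircz (idT n n₃) = 1 := by
  refine Matrix.ext fun p q => ?_
  obtain ⟨s, i⟩ := p; obtain ⟨t, j⟩ := q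
  rw [bcircz_apply]
  have hTd : Td (idT n n₃) (s - t) i j = if s = t ∧ i = j then 1 else 0 := by
    show qd _ = _
    simp only [idT, fin_val_eq_zero, sub_eq_zero]
    by_cases h : s = t <;> by_cases hij : i = j <;>
      simp [h, hij, qd, Complex.ext_iff, Matrix.one_apply,
        Quaternion.re_zero, Quaternion.imI_zero, Quaternion.imJ_zero, Quaternion.imK_zero,
        Quaternion.re_one, Quaternion.imI_one, Quaternion.imJ_one, Quaternion.imK_one]
  have hTc : Tc (idT n n₃) (s + t) i j = 0 := by
    show qc _ = _
    simp only [idT]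
    by_cases h : ((↑(s + t) : ℕ) = 0) <;> by_cases hij : i = j <;>
      simp [h, hij, qc, Complex.ext_iff, Matrix.one_apply,
        Quaternion.re_zero, Quaternion.imI_zero, Quaternion.imJ_zero, Quaternion.imK_zero,
        Quaternion.re_one, Quaternion.imI_one, Quaternion.imJ_one, Quaternion.imK_one]
  rw [hTd, hTc, c2q_zero, mul_zero, add_zero, Matrix.one_apply]
  simp only [Prod.mk.injEq]
  by_cases h : s = t ∧ i = j <;> simp [h, c2q_one, c2q_zero]

lemma bcircz_col0 {n₁ n₂ : ℕ} (X : Tensor Quat n₁ n₂ n₃) (k : Fin n₃) (i : Fin n₁)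
    (j : Fin n₂) : bcircz X (k, i) (0, j) = X k i j := by
  rw [bcircz_apply, sub_zero, add_zero]
  exact qsplit _

lemma bcircz_inj {n₁ n₂ : ℕ} {X Y : Tensor Quat n₁ n₂ n₃} (h : bcircz X = bcircz Y) :
    X = Y := by
  funext k
  refine Matrix.ext fun i j => ?_
  rw [← bcircz_col0 X k i j, ← bcircz_col0 Y k i j, h]

lemma qtmul_eq_idT_iff {n : ℕ} (X Y : Tensor Quat n n n₃) :
    qtmul X Y = idT n n₃ ↔ bcircz X * bcircz Y = 1 := by
  rw [bcircz_mul]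
  constructor
  · intro h; rw [h, bcircz_idT]
  · intro h
    apply bcircz_inj
    rw [h, bcircz_idT]

end NZ

/-- `A` is a unitary tensor iff `bcirc_z(A)` is a unitary matrix. -/
theorem stmt3 {n n₃ : ℕ} (A : Tensor Quat n n n₃) :
    IsUnitaryT A ↔
      (bcircz A * (bcircz A)ᴴ = 1 ∧ (bcircz A)ᴴ * bcircz A = 1) := by
  rcases Nat.eq_zero_or_pos n₃ with h0 | hpos
  · subst h0
    constructor
    · intro _
      constructor <;> · refine Matrix.ext fun p q => ?_; exact p.1.elim0
    · intro _
      constructor <;> · funext k; exact k.elim0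
  · haveI : NeZero n₃ := ⟨hpos.ne'⟩
    unfold IsUnitaryT
    rw [qtmul_eq_idT_iff, qtmul_eq_idT_iff, bcircz_conjT]
    exact ⟨fun ⟨h1, h2⟩ => ⟨h2, h1⟩, fun ⟨h1, h2⟩ => ⟨h2, h1⟩⟩

end
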